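/- Key summation lemma (Lemma 5.1): For positive integers l, m, n, p, Σ q^{x_1 + ... + x_m + y} = [p + l(n+m)]_q · [p+m−1 choose m]_q, where the sum is over all integers x_1,...,x_m,y satisfying 0 ≤ x_1 ≤ ... ≤ x_m ≤ p + min(x_1, l−1) and n·max(0, x_m − p) ≤ y ≤ p − 1 + n·min(l, x_1). -/

import Mathlib

/-!
Multiplying by `q - 1` collapses the geometric sum over `y`, leaving
`q ^ (|x| + p + n * min l x₁) - q ^ (|x| + n * max 0 (x_m - p))` for each admissible tuple `x`,
where `|x| = x₁ + ⋯ + x_m`.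
Split the first family according to `x₁ < l`, the second according to `p ≤ x_m`.
The rotation `(x₁, …, x_m) ↦ (x₂, …, x_m, x₁ + p)` matches the pieces `x₁ < l` and `p ≤ x_m`
term by term, so they cancel. On the piece `l ≤ x₁` subtracting `l` from every entry, and on the
piece `x_m < p` the identity, turn the tuples into arbitrary weakly increasing tuples with entries
below `p`. Their generating function is `[p + m - 1 choose m]_q` by the `q`-Pascal rule, and
the difference `(q ^ (p + l * (n + m)) - 1) * [p + m - 1 choose m]_q` is the claim times `q - 1`.
-/

open Finset

noncomputable def q : RatFunc ℚ := RatFunc.X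

noncomputable def qInt (n : ℕ) : RatFunc ℚ := ∑ i ∈ Finset.range n, q ^ i

noncomputable def qPoch (n : ℕ) : RatFunc ℚ := ∏ i ∈ Finset.range n, (1 - q ^ (i + 1))

noncomputable def qb (n m : ℕ) : RatFunc ℚ := qPoch n / (qPoch m * qPoch (n - m))

theorem q_pow_ne_one {k : ℕ} (hk : 0 < k) : q ^ k ≠ 1 := by
  rw [q, ← RatFunc.algebraMap_X, ← map_pow, ← map_one (algebraMap (Polynomial ℚ) (RatFunc ℚ)), Ne,
    (IsFractionRing.injective (Polynomial ℚ) (RatFunc ℚ)).eq_iff]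
  intro h
  simpa [hk.ne'] using congrArg Polynomial.natDegree h

theorem one_sub_q_pow_ne_zero {k : ℕ} (hk : 0 < k) : 1 - q ^ k ≠ 0 :=
  sub_ne_zero.2 (q_pow_ne_one hk).symm

theorem qPoch_ne_zero (n : ℕ) : qPoch n ≠ 0 :=
  prod_ne_zero_iff.2 fun i _ => one_sub_q_pow_ne_zero i.succ_pos

theorem qPoch_succ (n : ℕ) : qPoch (n + 1) = qPoch n * (1 - q ^ (n + 1)) :=
  prod_range_succ _ _

theorem qPoch_zero : qPoch 0 = 1 :=
  prod_range_zero _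

theorem qb_zero_right (n : ℕ) : qb n 0 = 1 := by
  rw [qb, qPoch_zero, one_mul, Nat.sub_zero, div_self (qPoch_ne_zero n)]

theorem qb_self (n : ℕ) : qb n n = 1 := by
  rw [qb, Nat.sub_self, qPoch_zero, mul_one, div_self (qPoch_ne_zero n)]

theorem qb_succ_succ (k d : ℕ) :
    qb (k + d + 2) (k + 1) = qb (k + d + 1) k + q ^ (k + 1) * qb (k + d + 1) (k + 1) := by
  simp only [qb, show k + d + 2 - (k + 1) = d + 1 by omega, show k + d + 1 - k = d + 1 by omega,
    show k + d + 1 - (k + 1) = d by omega, qPoch_succ]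
  have := qPoch_ne_zero k
  have := qPoch_ne_zero d
  have := one_sub_q_pow_ne_zero k.succ_pos
  have := one_sub_q_pow_ne_zero d.succ_pos
  field_simp
  ring

theorem q_sub_one_mul_qInt (n : ℕ) : (q - 1) * qInt n = q ^ n - 1 := by
  rw [qInt, mul_comm, geom_sum_mul]

theorem sub_one_mul_sum_pow_Icc {R : Type*} [CommRing R] (x : R) (s : ℕ) {a b : ℕ}
    (hab : a ≤ b + 1) :
    (x - 1) * ∑ y ∈ Icc a b, x ^ (s + y) = x ^ (s + (b + 1)) - x ^ (s + a) := by
  rw [← Ico_add_one_right_eq_Icc]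
  simp only [pow_add x s, ← mul_sum]
  rw [mul_left_comm, mul_comm (x - 1), geom_sum_Ico_mul x hab, mul_sub]

section Tuples

variable {α : Type*} [Preorder α] {m : ℕ}

theorem monotone_cons_iff {a : α} {f : Fin m → α} :
    Monotone (Fin.cons a f : Fin (m + 1) → α) ↔ (∀ i, a ≤ f i) ∧ Monotone f := by
  simpa only [monotone_iff_forall_lt] using!
    Fin.liftFun_cons (α := α) (· ≤ ·) (f := f) (a := a)

theorem monotone_snoc_iff {a : α} {f : Fin m → α} :
    Monotone (Fin.snoc f a : Fin (m + 1) → α) ↔ (∀ i, f i ≤ a) ∧ Monotone f := by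
  refine ⟨fun h => ⟨fun i => ?_, fun i j hij => ?_⟩, fun ⟨ha, hf⟩ i j hij => ?_⟩
  · simpa using h (Fin.castSucc_lt_last i).le
  · simpa using h (Fin.castSucc_le_castSucc_iff.2 hij)
  · induction j using Fin.lastCases with
    | last => induction i using Fin.lastCases with
      | last => simp
      | cast i => simpa using ha i
    | cast j => induction i using Fin.lastCases with
      | last => exact absurd hij (Fin.castSucc_lt_last j).not_ge
      | cast i => simpa using hf (Fin.castSucc_le_castSucc_iff.1 hij)

end Tuples

section

variable {M : Type*} [AddCommMonoid M]

theorem sum_monotone_window (f : ℕ → M) (m : ℕ) {N : ℕ} (c p : ℕ) (hN : c + p ≤ N) :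
    ∑ z ∈ (univ : Finset (Fin (m + 1) → Fin N)).filter
        (fun z : Fin (m + 1) → Fin N =>
          Monotone z ∧ c ≤ (z 0 : ℕ) ∧ (z (Fin.last m) : ℕ) < c + p),
      f (∑ i, (z i : ℕ)) =
    ∑ w ∈ (univ : Finset (Fin (m + 1) → Fin p)).filter Monotone,
      f (∑ i, (w i : ℕ) + (m + 1) * c) := by
  symm
  refine sum_nbij (fun w i => ⟨w i + c, by omega⟩) ?_ ?_ ?_ ?_
  · intro w hw
    simp only [mem_filter, mem_univ, true_and] at hw ⊢
    exact ⟨fun i j hij => Nat.add_le_add_right (hw hij) c, by omega, by omega⟩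
  · intro w _ w' _ h
    funext i
    exact Fin.ext (by simpa using congrArg Fin.val (congrFun h i))
  · intro z hz
    simp only [coe_filter, mem_univ, true_and, Set.mem_ofPred_eq] at hz
    obtain ⟨hz, h0, hlast⟩ := hz
    have hi : ∀ i, c ≤ (z i : ℕ) ∧ (z i : ℕ) < c + p := fun i =>
      ⟨h0.trans (hz (Fin.zero_le i)), Nat.lt_of_le_of_lt (hz (Fin.le_last i)) hlast⟩
    refine ⟨fun i => ⟨z i - c, by have := hi i; omega⟩, ?_, ?_⟩
    · simp only [coe_filter, mem_univ, true_and, Set.mem_ofPred_eq]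
      exact fun i j hij => Nat.sub_le_sub_right (hz hij) c
    · funext i
      exact Fin.ext (Nat.sub_add_cancel (hi i).1)
  · intro w _
    simp [sum_add_distrib]

theorem sum_monotone_head_eq_zero (f : ℕ → M) (m N : ℕ) :
    ∑ z ∈ (univ : Finset (Fin (m + 1) → Fin (N + 1))).filter
        (fun z => Monotone z ∧ z 0 = 0),
      f (∑ i, (z i : ℕ)) =
    ∑ w ∈ (univ : Finset (Fin m → Fin (N + 1))).filter Monotone, f (∑ i, (w i : ℕ)) := by
  refine sum_nbij' Fin.tail (fun w => Fin.cons 0 w) ?_ ?_ ?_ ?_ ?_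
  · intro z hz
    simp only [mem_filter, mem_univ, true_and] at hz ⊢
    rw [← Fin.cons_self_tail z, monotone_cons_iff] at hz
    exact hz.1.2
  · intro w hw
    simp only [mem_filter, mem_univ, true_and] at hw ⊢
    exact ⟨monotone_cons_iff.2 ⟨fun _ => Fin.zero_le _, hw⟩, rfl⟩
  · intro z hz
    rw [← (mem_filter.1 hz).2.2, Fin.cons_self_tail]
  · intro w _
    exact Fin.tail_cons _ _
  · intro z hz
    simp only [mem_filter, mem_univ, true_and] at hz
    simp [Fin.sum_univ_succ, hz.2, Fin.tail]

end

-- The generating function of partitions fitting in an `m × (p - 1)` box.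
noncomputable def monotoneGF (p m : ℕ) : RatFunc ℚ :=
  ∑ z ∈ (univ : Finset (Fin m → Fin p)).filter Monotone, q ^ ∑ i, (z i : ℕ)

theorem monotoneGF_zero_right (p : ℕ) : monotoneGF p 0 = 1 := by
  rw [monotoneGF, filter_true_of_mem fun z _ => Subsingleton.monotone z]
  simp

theorem monotoneGF_one_left (m : ℕ) : monotoneGF 1 m = 1 := by
  rw [monotoneGF, filter_true_of_mem fun z _ => Subsingleton.monotone' z]
  simp

theorem monotoneGF_succ_succ (p m : ℕ) :
    monotoneGF (p + 1) (m + 1) = monotoneGF (p + 1) m + q ^ (m + 1) * monotoneGF p (m + 1) := by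
  rw [monotoneGF, ← sum_filter_add_sum_filter_not _ (fun z => z 0 = 0), filter_filter,
    sum_monotone_head_eq_zero (q ^ ·), filter_filter]
  congr 1
  have hfilter : (univ.filter fun z : Fin (m + 1) → Fin (p + 1) => Monotone z ∧ ¬z 0 = 0) =
      univ.filter fun z : Fin (m + 1) → Fin (p + 1) =>
        Monotone z ∧ 1 ≤ (z 0 : ℕ) ∧ (z (Fin.last m) : ℕ) < 1 + p :=
    filter_congr fun z _ => and_congr_right fun _ => by
      rw [Fin.ext_iff, Fin.val_zero]
      have := (z (Fin.last m)).isLt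
      omega
  rw [hfilter, sum_monotone_window (q ^ ·) m 1 p (by omega), monotoneGF, mul_sum]
  exact sum_congr rfl fun w _ => by rw [mul_one, pow_add, mul_comm]

theorem monotoneGF_eq_qb {p : ℕ} (hp : 0 < p) (m : ℕ) : monotoneGF p m = qb (p + m - 1) m := by
  obtain ⟨p, rfl⟩ : ∃ k, p = k + 1 := ⟨p - 1, by omega⟩
  rw [Nat.add_right_comm, Nat.add_sub_cancel]
  clear hp
  induction p generalizing m with
  | zero => rw [monotoneGF_one_left, zero_add, qb_self]
  | succ p ih =>
    induction m with
    | zero => rw [monotoneGF_zero_right, qb_zero_right]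
    | succ m ihm =>
      rw [monotoneGF_succ_succ, ihm, ih (m + 1), show p + 1 + (m + 1) = m + p + 2 by omega,
        show p + 1 + m = m + p + 1 by omega, show p + (m + 1) = m + p + 1 by omega, qb_succ_succ]

-- The paper's tuple `(x₁, …, x_{m+1})` is `(x 0, …, x (Fin.last m))`.
def summationRegion (p l m : ℕ) : Finset (Fin (m + 1) → Fin (p + l)) :=
  univ.filter fun x => Monotone x ∧ (x (Fin.last m) : ℕ) ≤ p + min (x 0 : ℕ) (l - 1)

theorem snoc_tail_mem_summationRegion {p l m : ℕ} {x : Fin (m + 1) → Fin (p + l)}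
    (hx : x ∈ summationRegion p l m) (h0 : (x 0 : ℕ) < l) :
    (Fin.snoc (Fin.tail x) ⟨x 0 + p, by omega⟩ : Fin (m + 1) → Fin (p + l)) ∈
      (summationRegion p l m).filter (fun z => p ≤ (z (Fin.last m) : ℕ)) := by
  simp only [summationRegion, mem_filter, mem_univ, true_and] at hx ⊢
  obtain ⟨hx, hlast⟩ := hx
  have hge : ∀ i,
      x 0 ≤ Fin.snoc (α := fun _ => Fin (p + l)) (Fin.tail x) ⟨x 0 + p, by omega⟩ i := by
    intro i
    induction i using Fin.lastCases with
    | last => simp [Fin.le_def]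
    | cast i => simpa [Fin.tail] using hx (Fin.zero_le i.succ)
  have := hge 0
  simp only [Fin.snoc_last, Fin.le_def] at this ⊢
  refine ⟨⟨monotone_snoc_iff.2 ⟨fun i => ?_, hx.comp Fin.strictMono_succ.monotone⟩, by omega⟩,
    by omega⟩
  have := hx (Fin.le_last i.succ)
  simp only [Fin.le_def, Fin.tail] at this ⊢
  omega

theorem cons_init_mem_summationRegion {p l m : ℕ} {z : Fin (m + 1) → Fin (p + l)}
    (hz : z ∈ (summationRegion p l m).filter (fun z => p ≤ (z (Fin.last m) : ℕ))) :
    (Fin.cons ⟨z (Fin.last m) - p, (Nat.sub_le _ _).trans_lt (z _).isLt⟩ (Fin.init z) :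
      Fin (m + 1) → Fin (p + l)) ∈ (summationRegion p l m).filter (fun x => (x 0 : ℕ) < l) := by
  simp only [summationRegion, mem_filter, mem_univ, true_and] at hz ⊢
  obtain ⟨⟨hz, hlast⟩, hp⟩ := hz
  have hbound := (z (Fin.last m)).isLt
  have hle : ∀ i, Fin.cons (α := fun _ => Fin (p + l))
      ⟨z (Fin.last m) - p, (Nat.sub_le _ _).trans_lt (z _).isLt⟩ (Fin.init z) i ≤
        z (Fin.last m) := by
    intro i
    induction i using Fin.cases with
    | zero => simp [Fin.le_def]
    | succ i => simpa [Fin.init] using hz (Fin.le_last i.castSucc)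
  have := hle (Fin.last m)
  simp only [Fin.cons_zero, Fin.le_def] at this ⊢
  refine ⟨⟨monotone_cons_iff.2 ⟨fun i => ?_, hz.comp Fin.strictMono_castSucc.monotone⟩,
    by omega⟩, by omega⟩
  have := hz (Fin.zero_le i.castSucc)
  simp only [Fin.le_def, Fin.init] at this ⊢
  omega

theorem sum_summationRegion_rotate {M : Type*} [AddCommMonoid M] (f : ℕ → ℕ → M)
    (p l m : ℕ) :
    ∑ x ∈ (summationRegion p l m).filter (fun x => (x 0 : ℕ) < l),
      f (∑ i, (x i : ℕ) + p) (x 0) =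
    ∑ z ∈ (summationRegion p l m).filter (fun z => p ≤ (z (Fin.last m) : ℕ)),
      f (∑ i, (z i : ℕ)) (z (Fin.last m) - p) := by
  refine sum_bij'
    (fun x hx => Fin.snoc (Fin.tail x) ⟨x 0 + p, by have := (mem_filter.1 hx).2; omega⟩)
    (fun z _ => Fin.cons ⟨z (Fin.last m) - p, (Nat.sub_le _ _).trans_lt (z _).isLt⟩ (Fin.init z))
    (fun x hx => snoc_tail_mem_summationRegion (mem_filter.1 hx).1 (mem_filter.1 hx).2)
    (fun z hz => cons_init_mem_summationRegion hz) ?_ ?_ ?_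
  · intro x _
    conv_rhs => rw [← Fin.cons_self_tail x]
    congr 1
    · exact Fin.ext (by simp)
    · exact Fin.init_snoc _ _
  · intro z hz
    have hp := (mem_filter.1 hz).2
    conv_rhs => rw [← Fin.snoc_init_self z]
    simp only [Fin.tail_cons, Fin.cons_zero]
    congr 1
    exact Fin.ext (Nat.sub_add_cancel hp)
  · intro x _
    simp only [Fin.sum_univ_succ (f := fun i => (x i : ℕ)), Fin.sum_univ_castSucc,
      Fin.snoc_castSucc, Fin.tail, Fin.snoc_last, add_tsub_cancel_right]
    congr 1
    ring

theorem q_sub_one_mul_sum_Icc_of_mem_summationRegion {p l m : ℕ} (n : ℕ) (hp : 0 < p)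
    {x : Fin (m + 1) → Fin (p + l)} (hx : x ∈ summationRegion p l m) :
    (q - 1) * ∑ y ∈ Icc (n * ((x (Fin.last m) : ℕ) - p)) (p - 1 + n * min l (x 0 : ℕ)),
        q ^ (∑ i, (x i : ℕ) + y) =
      q ^ (∑ i, (x i : ℕ) + p + n * min l (x 0 : ℕ)) -
        q ^ (∑ i, (x i : ℕ) + n * ((x (Fin.last m) : ℕ) - p)) := by
  have hlast := (mem_filter.1 hx).2.2
  have hspread : n * ((x (Fin.last m) : ℕ) - p) ≤ n * min l (x 0 : ℕ) :=
    Nat.mul_le_mul_left n (by omega)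
  rw [sub_one_mul_sum_pow_Icc q _ (by omega),
    show p - 1 + n * min l (x 0 : ℕ) + 1 = p + n * min l (x 0 : ℕ) by omega, add_assoc]

theorem sum_summationRegion_pow_min (n p l m : ℕ) :
    ∑ x ∈ summationRegion p l m, q ^ (∑ i, (x i : ℕ) + p + n * min l (x 0 : ℕ)) =
      ∑ z ∈ (summationRegion p l m).filter (fun z => p ≤ (z (Fin.last m) : ℕ)),
          q ^ (∑ i, (z i : ℕ) + n * ((z (Fin.last m) : ℕ) - p)) +
        q ^ (p + l * (n + (m + 1))) * monotoneGF p (m + 1) := by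
  rw [← sum_filter_add_sum_filter_not _ (fun x => (x 0 : ℕ) < l)]
  congr 1
  · refine (sum_congr rfl fun x hx => ?_).trans
      (sum_summationRegion_rotate (fun a b => q ^ (a + n * b)) p l m)
    rw [min_eq_right (mem_filter.1 hx).2.le]
  · have hfilter : (summationRegion p l m).filter (fun x => ¬(x 0 : ℕ) < l) =
        univ.filter fun x : Fin (m + 1) → Fin (p + l) =>
          Monotone x ∧ l ≤ (x 0 : ℕ) ∧ (x (Fin.last m) : ℕ) < l + p := by
      rw [summationRegion, filter_filter]
      refine filter_congr fun x _ => ?_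
      rw [and_assoc]
      exact and_congr_right fun _ => by have := (x (Fin.last m)).isLt; omega
    rw [hfilter, monotoneGF, mul_sum]
    refine (sum_congr rfl fun x hx => ?_).trans
      ((sum_monotone_window (fun s => q ^ (s + (p + n * l))) m (N := p + l) l p (by omega)).trans
        (sum_congr rfl fun w _ => ?_))
    · rw [min_eq_left (mem_filter.1 hx).2.2.1, add_assoc]
    · rw [← pow_add]
      ring_nf

theorem sum_summationRegion_pow_tsub (n p l m : ℕ) :
    ∑ x ∈ summationRegion p l m, q ^ (∑ i, (x i : ℕ) + n * ((x (Fin.last m) : ℕ) - p)) =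
      ∑ z ∈ (summationRegion p l m).filter (fun z => p ≤ (z (Fin.last m) : ℕ)),
          q ^ (∑ i, (z i : ℕ) + n * ((z (Fin.last m) : ℕ) - p)) +
        monotoneGF p (m + 1) := by
  rw [← sum_filter_add_sum_filter_not _ (fun x => p ≤ (x (Fin.last m) : ℕ))]
  congr 1
  have hfilter : (summationRegion p l m).filter (fun x => ¬p ≤ (x (Fin.last m) : ℕ)) =
      univ.filter fun x : Fin (m + 1) → Fin (p + l) =>
        Monotone x ∧ 0 ≤ (x 0 : ℕ) ∧ (x (Fin.last m) : ℕ) < 0 + p := by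
    rw [summationRegion, filter_filter]
    refine filter_congr fun x _ => ?_
    rw [and_assoc]
    exact and_congr_right fun _ => by omega
  rw [hfilter, monotoneGF]
  refine (sum_congr rfl fun x hx => ?_).trans
    ((sum_monotone_window (q ^ ·) m (N := p + l) 0 p (by omega)).trans
      (sum_congr rfl fun w _ => by rw [mul_zero, add_zero]))
  have hlast := (mem_filter.1 hx).2.2.2
  rw [Nat.sub_eq_zero_of_le (by omega), mul_zero, add_zero]

theorem stmt10 (l m n p : ℕ) (hm : 0 < m) (hp : 0 < p) :
    ∑ x ∈ (Finset.univ : Finset (Fin m → Fin (p + l))).filter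
        (fun x => Monotone x ∧
          (x ⟨m - 1, by omega⟩).val ≤ p + min (x ⟨0, hm⟩).val (l - 1)),
      ∑ y ∈ Finset.Icc (n * ((x ⟨m - 1, by omega⟩).val - p))
          (p - 1 + n * min l (x ⟨0, hm⟩).val),
        q ^ ((∑ i : Fin m, (x i : ℕ)) + y) =
    qInt (p + l * (n + m)) * qb (p + m - 1) m := by
  obtain ⟨m, rfl⟩ : ∃ k, m = k + 1 := ⟨m - 1, by omega⟩
  change ∑ x ∈ summationRegion p l m, ∑ y ∈ Icc (n * ((x (Fin.last m) : ℕ) - p))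
      (p - 1 + n * min l (x 0 : ℕ)), q ^ (∑ i, (x i : ℕ) + y) = _
  apply mul_left_cancel₀ (sub_ne_zero.2 (by simpa using q_pow_ne_one one_pos) : q - 1 ≠ 0)
  rw [mul_sum, sum_congr rfl fun x hx => q_sub_one_mul_sum_Icc_of_mem_summationRegion n hp hx,
    sum_sub_distrib, sum_summationRegion_pow_min, sum_summationRegion_pow_tsub,
    monotoneGF_eq_qb hp, ← mul_assoc, q_sub_one_mul_qInt]
  ring
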